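/- arXiv:1902.00071 — 8 statements merged into one kernel-verified Lean document; each statement's English description precedes it below -/
import Mathlib

section
/- Let n, d ≥ 1, let f_1, …, f_n : ℝ^d → ℝ be differentiable convex functions, let f := (1/n)·Σ_{i=1}^n f_i, and let w* ∈ ℝ^d satisfy ∇f(w*) = 0. Let (Ω, P) be a finite probability space, let v : Ω → ℝ^n be a sampling vector, i.e. E[v_i] = 1 for every i ∈ {1,…,n}, and for each ω ∈ Ω set f_{v(ω)}(w) := (1/n)·Σ_{i=1}^n f_i(w)·v_i(ω). Suppose for each ω there is L_v(ω) ≥ 0 such that f_{v(ω)} is convex and its gradient is L_v(ω)-Lipschitz. Then for every w ∈ ℝ^d: E[‖∇f_v(w) − ∇f_v(w*)‖₂²] ≤ 2·(max_{i∈[n]} E[L_v·v_i])·(f(w) − f(w*)). In other words, the expected smoothness inequality holds with constant 𝓛 = max_{i∈[n]} E[L_v·v_i]. -/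
open Finset RealInnerProductSpace

/-!
For a convex function `g` with `L`-Lipschitz gradient, `‖∇g x - ∇g y‖² ≤ 2L · D_g(x, y)`, where
`D_g(x, y) = g x - g y - ⟪∇g y, x - y⟫` is the Bregman divergence: compare `g` at `x` and `y`
through the gradient step `z = x - L⁻¹ (∇g x - ∇g y)`, using `D_g(z, y) ≥ 0` (convexity) and
`D_g(z, x) ≤ L/2 ‖z - x‖²` (descent lemma). The Bregman divergence of `f_v` at `(w, w*)` is
`(1/n) ∑ᵢ vᵢ D_{fᵢ}(w, w*)` with every `D_{fᵢ}(w, w*) ≥ 0`, so averaging over `ω` bounds the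
left side by `2 𝓛 · (1/n) ∑ᵢ D_{fᵢ}(w, w*)`, and this sum is `D_f(w, w*) = f w - f w*` since
`∇f(w*) = 0`.
-/

section Bregman

variable {E : Type*} [NormedAddCommGroup E] [InnerProductSpace ℝ E] [CompleteSpace E]

noncomputable def bregmanDiv (g : E → ℝ) (x y : E) : ℝ := g x - g y - ⟪gradient g y, x - y⟫

lemma HasGradientAt.hasDerivAt_comp_add_smul {g : E → ℝ} {g' y u : E} {t : ℝ}
    (h : HasGradientAt g g' (y + t • u)) :
    HasDerivAt (fun s : ℝ => g (y + s • u)) ⟪g', u⟫ t := by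
  have hline : HasDerivAt (fun s : ℝ => y + s • u) u t := by
    simpa using ((hasDerivAt_id t).smul_const u).const_add y
  simpa [Function.comp_def] using
    (hasGradientAt_iff_hasFDerivAt.mp h).comp_hasDerivAt t hline

lemma ConvexOn.bregmanDiv_nonneg {g : E → ℝ} (hconv : ConvexOn ℝ Set.univ g) {y : E}
    (hg : DifferentiableAt ℝ g y) (x : E) : 0 ≤ bregmanDiv g x y := by
  have hline : ConvexOn ℝ Set.univ fun s : ℝ => g (y + s • (x - y)) := by
    have heq : (fun s : ℝ => g (y + s • (x - y))) = g ∘ AffineMap.lineMap y x := by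
      funext s
      simp [AffineMap.lineMap_apply, add_comm]
    simpa [heq] using hconv.comp_affineMap (AffineMap.lineMap y x)
  have hd : HasDerivAt (fun s : ℝ => g (y + s • (x - y))) ⟪gradient g y, x - y⟫ 0 :=
    HasGradientAt.hasDerivAt_comp_add_smul (by simpa using hg.hasGradientAt)
  have hslope := hline.le_slope_of_hasDerivAt (Set.mem_univ 0) (Set.mem_univ 1) one_pos hd
  simp only [slope_def_field, zero_smul, add_zero, one_smul, add_sub_cancel, sub_zero,
    div_one] at hslope
  unfold bregmanDiv
  linarith

lemma bregmanDiv_le_of_lipschitz_gradient {g : E → ℝ} (hg : Differentiable ℝ g) {L : ℝ}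
    (hsm : ∀ a b, ‖gradient g a - gradient g b‖ ≤ L * ‖a - b‖) (x y : E) :
    bregmanDiv g x y ≤ L / 2 * ‖x - y‖ ^ 2 := by
  set u := x - y
  have hderiv (t : ℝ) :
      HasDerivAt (fun s : ℝ => g (y + s • u)) ⟪gradient g (y + t • u), u⟫ t :=
    (hg _).hasGradientAt.hasDerivAt_comp_add_smul
  have hbound (t : ℝ) :
      HasDerivAt (fun s : ℝ => g y + ⟪gradient g y, u⟫ * s + L / 2 * ‖u‖ ^ 2 * s ^ 2)
        (⟪gradient g y, u⟫ + L * ‖u‖ ^ 2 * t) t := by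
    refine ((((hasDerivAt_id t).const_mul ⟪gradient g y, u⟫).const_add (g y)).add
      ((hasDerivAt_pow 2 t).const_mul (L / 2 * ‖u‖ ^ 2))).congr_deriv ?_
    norm_num
    ring
  have key := image_le_of_deriv_right_le_deriv_boundary (a := 0) (b := 1)
    (fun t _ => (hderiv t).continuousAt.continuousWithinAt)
    (fun t _ => (hderiv t).hasDerivWithinAt)
    (by simp) (fun t _ => (hbound t).continuousAt.continuousWithinAt)
    (fun t _ => (hbound t).hasDerivWithinAt) ?_ (Set.right_mem_Icc.mpr zero_le_one)
  · simp only [one_smul, mul_one, one_pow, u, add_sub_cancel] at key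
    unfold bregmanDiv
    linarith
  · intro t ht
    have hstep : ‖gradient g (y + t • u) - gradient g y‖ ≤ L * t * ‖u‖ := by
      simpa [norm_smul, abs_of_nonneg ht.1, mul_assoc] using hsm (y + t • u) y
    have := real_inner_le_norm (gradient g (y + t • u) - gradient g y) u
    rw [inner_sub_left] at this
    nlinarith [norm_nonneg u]

lemma bregmanDiv_eq_sub_add_inner (g : E → ℝ) (x y z : E) :
    bregmanDiv g x y =
      bregmanDiv g z y - bregmanDiv g z x + ⟪gradient g x - gradient g y, x - z⟫ := by
  simp only [bregmanDiv, inner_sub_left, inner_sub_right]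
  ring

lemma ConvexOn.sq_norm_gradient_sub_le_bregmanDiv {g : E → ℝ} (hconv : ConvexOn ℝ Set.univ g)
    (hg : Differentiable ℝ g) {L : ℝ} (hL : 0 ≤ L)
    (hsm : ∀ a b, ‖gradient g a - gradient g b‖ ≤ L * ‖a - b‖) (x y : E) :
    ‖gradient g x - gradient g y‖ ^ 2 ≤ 2 * L * bregmanDiv g x y := by
  rcases hL.eq_or_lt with rfl | hLpos
  · simpa using hsm x y
  set u := gradient g x - gradient g y
  set z := x - L⁻¹ • u
  have hlower := hconv.bregmanDiv_nonneg (hg y) z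
  have hupper := bregmanDiv_le_of_lipschitz_gradient hg hsm z x
  have hxz : x - z = L⁻¹ • u := sub_sub_cancel x _
  rw [← norm_neg, neg_sub, hxz] at hupper
  rw [bregmanDiv_eq_sub_add_inner g x y z, hxz, real_inner_smul_right,
    real_inner_self_eq_norm_sq]
  rw [norm_smul, Real.norm_of_nonneg (inv_nonneg.mpr hLpos.le)] at hupper
  have hsq : L * (L⁻¹ * ‖u‖ ^ 2) = ‖u‖ ^ 2 := by field_simp
  have hsq' : L * (L / 2 * (L⁻¹ * ‖u‖) ^ 2) = ‖u‖ ^ 2 / 2 := by field_simp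
  nlinarith

lemma hasGradientAt_const_mul_sum_mul {ι : Type*} [Fintype ι] {f : ι → E → ℝ} {x : E}
    (hf : ∀ i, DifferentiableAt ℝ (f i) x) (c : ℝ) (a : ι → ℝ) :
    HasGradientAt (fun w => c * ∑ i, f i w * a i) (c • ∑ i, a i • gradient (f i) x) x := by
  rw [hasGradientAt_iff_hasFDerivAt]
  refine ((HasFDerivAt.fun_sum fun i _ =>
    (hf i).hasFDerivAt.mul_const (a i)).const_mul c).congr_fderiv ?_
  simp [map_sum, toDual_gradient]

lemma bregmanDiv_const_mul_sum_mul {ι : Type*} [Fintype ι] {f : ι → E → ℝ} {y : E}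
    (hf : ∀ i, DifferentiableAt ℝ (f i) y) (c : ℝ) (a : ι → ℝ) (x : E) :
    bregmanDiv (fun w => c * ∑ i, f i w * a i) x y = c * ∑ i, a i * bregmanDiv (f i) x y := by
  rw [bregmanDiv, (hasGradientAt_const_mul_sum_mul hf c a).gradient, real_inner_smul_left,
    sum_inner]
  simp only [real_inner_smul_left, bregmanDiv, mul_sum, ← sum_sub_distrib]
  exact sum_congr rfl fun i _ => by ring

end Bregman

lemma sum_sum_mul_le_sup'_mul_sum {Ω ι : Type*} [Fintype Ω] [Fintype ι]
    (hι : (univ : Finset ι).Nonempty) (q : Ω → ι → ℝ) {D : ι → ℝ} (hD : ∀ i, 0 ≤ D i) :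
    ∑ ω, ∑ i, q ω i * D i ≤ univ.sup' hι (fun i => ∑ ω, q ω i) * ∑ i, D i := by
  rw [sum_comm, mul_sum]
  gcongr with i
  rw [← sum_mul, mul_comm _ (D i), mul_comm _ (D i)]
  exact mul_le_mul_of_nonneg_left (le_sup' (fun j => ∑ ω, q ω j) (mem_univ i)) (hD i)

theorem expected_smoothness_master_lemma_general
    {d n : ℕ} (hn : 1 ≤ n)
    (f : Fin n → EuclideanSpace ℝ (Fin d) → ℝ)
    (hdiff : ∀ i, Differentiable ℝ (f i))
    (hconv : ∀ i, ConvexOn ℝ Set.univ (f i))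
    (F : EuclideanSpace ℝ (Fin d) → ℝ)
    (hF : F = fun w => (1 / (n : ℝ)) * ∑ i, f i w)
    (wstar : EuclideanSpace ℝ (Fin d))
    (hstar : gradient F wstar = 0)
    (Ω : Type) [Fintype Ω] (p : Ω → ℝ)
    (hp : ∀ ω, 0 ≤ p ω)
    (v : Ω → Fin n → ℝ)
    (fv : Ω → EuclideanSpace ℝ (Fin d) → ℝ)
    (hfv : ∀ ω, fv ω = fun w => (1 / (n : ℝ)) * ∑ i, f i w * v ω i)
    (Lv : Ω → ℝ) (hLv : ∀ ω, 0 ≤ Lv ω)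
    (hfvconv : ∀ ω, ConvexOn ℝ Set.univ (fv ω))
    (hfvsmooth : ∀ ω x y, ‖gradient (fv ω) x - gradient (fv ω) y‖ ≤ Lv ω * ‖x - y‖) :
    ∀ w, ∑ ω, p ω * ‖gradient (fv ω) w - gradient (fv ω) wstar‖ ^ 2 ≤
      2 * (Finset.univ.sup' (Finset.univ_nonempty_iff.mpr (Fin.pos_iff_nonempty.mp hn))
        fun i => ∑ ω, p ω * (Lv ω * v ω i)) * (F w - F wstar) := by
  intro w
  set D := fun i => bregmanDiv (f i) w wstar
  have hD : ∀ i, 0 ≤ D i := fun i => (hconv i).bregmanDiv_nonneg (hdiff i wstar) w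
  have hFgap : F w - F wstar = 1 / n * ∑ i, D i := by
    have h := bregmanDiv_const_mul_sum_mul (fun i => hdiff i wstar) (1 / n) (fun _ => 1) w
    simp only [mul_one, one_mul, ← hF] at h
    rwa [bregmanDiv, hstar, inner_zero_left, sub_zero] at h
  have hfvgap (ω : Ω) : ‖gradient (fv ω) w - gradient (fv ω) wstar‖ ^ 2 ≤
      2 * Lv ω * (1 / n * ∑ i, v ω i * D i) := by
    have hfvdiff : Differentiable ℝ (fv ω) := by rw [hfv ω]; fun_prop
    calc _ ≤ 2 * Lv ω * bregmanDiv (fv ω) w wstar :=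
          (hfvconv ω).sq_norm_gradient_sub_le_bregmanDiv hfvdiff (hLv ω) (hfvsmooth ω) w wstar
      _ = _ := by rw [hfv ω, bregmanDiv_const_mul_sum_mul (fun i => hdiff i wstar)]
  calc ∑ ω, p ω * ‖gradient (fv ω) w - gradient (fv ω) wstar‖ ^ 2
      ≤ ∑ ω, p ω * (2 * Lv ω * (1 / n * ∑ i, v ω i * D i)) :=
        sum_le_sum fun ω _ => mul_le_mul_of_nonneg_left (hfvgap ω) (hp ω)
    _ = 2 * (1 / n) * ∑ ω, ∑ i, p ω * (Lv ω * v ω i) * D i := by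
        simp only [mul_sum]
        exact sum_congr rfl fun ω _ => sum_congr rfl fun i _ => by ring
    _ ≤ 2 * (1 / n) * (univ.sup' (univ_nonempty_iff.mpr (Fin.pos_iff_nonempty.mp hn))
          (fun i => ∑ ω, p ω * (Lv ω * v ω i)) * ∑ i, D i) := by
        gcongr
        exact sum_sum_mul_le_sup'_mul_sum _ _ hD
    _ = _ := by rw [hFgap]; ring

/-- **Expected smoothness (master lemma).** If each `f i` is differentiable and convex,
`F = (1/n) ∑ f i`, `∇F w* = 0`, `v` is a sampling vector on a finite probability space
(`E[v i] = 1` for all `i`), and each realization `fv ω = (1/n) ∑ f i · v ω i` is convex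
with `Lv ω`-Lipschitz gradient, then the expected smoothness inequality holds with
constant `𝓛 = max_i E[Lv · v i]`. -/
theorem expected_smoothness_master_lemma
    {d n : ℕ} (hd : 1 ≤ d) (hn : 1 ≤ n)
    (f : Fin n → EuclideanSpace ℝ (Fin d) → ℝ)
    (hdiff : ∀ i, Differentiable ℝ (f i))
    (hconv : ∀ i, ConvexOn ℝ Set.univ (f i))
    (F : EuclideanSpace ℝ (Fin d) → ℝ)
    (hF : F = fun w => (1 / (n : ℝ)) * ∑ i, f i w)
    (wstar : EuclideanSpace ℝ (Fin d))
    (hstar : gradient F wstar = 0)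
    (Ω : Type) [Fintype Ω] (p : Ω → ℝ)
    (hp : ∀ ω, 0 ≤ p ω) (hp1 : ∑ ω, p ω = 1)
    (v : Ω → Fin n → ℝ)
    (hv : ∀ i, ∑ ω, p ω * v ω i = 1)
    (fv : Ω → EuclideanSpace ℝ (Fin d) → ℝ)
    (hfv : ∀ ω, fv ω = fun w => (1 / (n : ℝ)) * ∑ i, f i w * v ω i)
    (Lv : Ω → ℝ) (hLv : ∀ ω, 0 ≤ Lv ω)
    (hfvconv : ∀ ω, ConvexOn ℝ Set.univ (fv ω))
    (hfvsmooth : ∀ ω x y, ‖gradient (fv ω) x - gradient (fv ω) y‖ ≤ Lv ω * ‖x - y‖) :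
    ∀ w, ∑ ω, p ω * ‖gradient (fv ω) w - gradient (fv ω) wstar‖ ^ 2 ≤
      2 * (Finset.univ.sup' (Finset.univ_nonempty_iff.mpr (Fin.pos_iff_nonempty.mp hn))
        fun i => ∑ ω, p ω * (Lv ω * v ω i)) * (F w - F wstar) :=
  expected_smoothness_master_lemma_general hn f hdiff hconv F hF wstar hstar Ω p hp v fv hfv Lv hLv
    hfvconv hfvsmooth
end

section
/- (Simple bound) Let n ≥ 2, let a_1, …, a_n ∈ ℝ^d, U > 0, and let b ∈ {1,…,n}. Then the expected smoothness constant of b-nice sampling satisfies 𝓛(b) ≤ 𝓛_simple(b) := (n/b)·((b−1)/(n−1))·L̄ + (1/b)·((n−b)/(n−1))·L_max. -/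
open Finset Matrix

/-- `lamMax A` is the largest eigenvalue of a real symmetric matrix `A`,
expressed as the supremum of the Rayleigh quotient over unit vectors. -/
noncomputable def lamMax {d : ℕ} (A : Matrix (Fin d) (Fin d) ℝ) : ℝ :=
  sSup {r : ℝ | ∃ x : Fin d → ℝ, (∑ j, x j ^ 2) = 1 ∧ r = x ⬝ᵥ A.mulVec x}

/-- Subsample smoothness constant `L_B = (U/|B|)·λ_max(∑_{j∈B} a_j a_jᵀ)`. -/
noncomputable def LB {n d : ℕ} (U : ℝ) (a : Fin n → Fin d → ℝ) (B : Finset (Fin n)) : ℝ :=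
  (U / (B.card : ℝ)) * lamMax (∑ j ∈ B, Matrix.vecMulVec (a j) (a j))

/-- Individual smoothness constant `L_i = U‖a_i‖₂²`. -/
noncomputable def Lind {n d : ℕ} (U : ℝ) (a : Fin n → Fin d → ℝ) (i : Fin n) : ℝ :=
  U * ∑ j, a i j ^ 2

/-- The expected smoothness constant of `b`-nice sampling,
`𝓛(b) = (1/C(n−1,b−1)) · max_i ∑_{B ⊆ [n], |B| = b, i ∈ B} L_B`. -/
noncomputable def expSmooth {n d : ℕ} (hn : 0 < n) (U : ℝ) (a : Fin n → Fin d → ℝ)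
    (b : ℕ) : ℝ :=
  (1 / ((n - 1).choose (b - 1) : ℝ)) *
    Finset.univ.sup' (Finset.univ_nonempty_iff.mpr (Fin.pos_iff_nonempty.mp hn))
      (fun i : Fin n =>
        ∑ B ∈ (Finset.powersetCard b (Finset.univ : Finset (Fin n))).filter
          (fun B => i ∈ B), LB U a B)

/-! The matrix `∑_{j∈B} a_j a_jᵀ` is positive semidefinite, so its largest eigenvalue is at most
its trace and `L_B ≤ (1/b) ∑_{j∈B} L_j`. Summing over the `b`-subsets containing `i`, the term
`L_i` occurs `C(n-1,b-1)` times and every other `L_j` occurs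
`C(n-2,b-2) = (b-1)/(n-1) · C(n-1,b-1)` times; the result is the simple bound with `L_max`
replaced by `L_i`. -/

section Rayleigh

variable {d : ℕ}

lemma lamMax_le {A : Matrix (Fin d) (Fin d) ℝ} {c : ℝ} (hc : 0 ≤ c)
    (h : ∀ x : Fin d → ℝ, ∑ k, x k ^ 2 = 1 → x ⬝ᵥ A *ᵥ x ≤ c) : lamMax A ≤ c :=
  Real.sSup_le (fun _ ⟨x, hx, hr⟩ => hr ▸ h x hx) hc

lemma dotProduct_sum_vecMulVec_self_mulVec {ι : Type*} (s : Finset ι) (v : ι → Fin d → ℝ)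
    (x : Fin d → ℝ) :
    x ⬝ᵥ (∑ j ∈ s, vecMulVec (v j) (v j)) *ᵥ x = ∑ j ∈ s, (v j ⬝ᵥ x) ^ 2 := by
  simp only [sum_mulVec, vecMulVec_mulVec, dotProduct_comm _ x, op_smul_eq_smul, dotProduct_sum,
    dotProduct_smul, smul_eq_mul, sq]

lemma lamMax_sum_vecMulVec_self_le {ι : Type*} (s : Finset ι) (v : ι → Fin d → ℝ) :
    lamMax (∑ j ∈ s, vecMulVec (v j) (v j)) ≤ ∑ j ∈ s, ∑ k, v j k ^ 2 := by
  refine lamMax_le (by positivity) fun x hx => ?_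
  rw [dotProduct_sum_vecMulVec_self_mulVec]
  refine sum_le_sum fun j _ => ?_
  calc (v j ⬝ᵥ x) ^ 2 ≤ (∑ k, v j k ^ 2) * ∑ k, x k ^ 2 := sum_mul_sq_le_sq_mul_sq _ _ _
    _ = ∑ k, v j k ^ 2 := by rw [hx, mul_one]

end Rayleigh

lemma LB_le_mean_Lind {n d : ℕ} {U : ℝ} (hU : 0 ≤ U) (a : Fin n → Fin d → ℝ)
    (B : Finset (Fin n)) : LB U a B ≤ 1 / #B * ∑ j ∈ B, Lind U a j := by
  calc LB U a B ≤ U / #B * ∑ j ∈ B, ∑ k, a j k ^ 2 := by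
        unfold LB
        gcongr
        exact lamMax_sum_vecMulVec_self_le B a
    _ = 1 / #B * ∑ j ∈ B, Lind U a j := by
        simp only [Lind, ← mul_sum]
        ring

section Counting

variable {α : Type*} [Fintype α] [DecidableEq α]

lemma sum_sum_eq_sum_card_filter_mem_smul {β : Type*} [AddCommMonoid β] (𝒜 : Finset (Finset α))
    (f : α → β) : ∑ B ∈ 𝒜, ∑ j ∈ B, f j = ∑ j, #{B ∈ 𝒜 | j ∈ B} • f j := by
  rw [sum_comm' (t' := univ) (s' := fun j => {B ∈ 𝒜 | j ∈ B}) (by simp)]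
  simp only [sum_const]

lemma card_powersetCard_filter_mem (i : α) {b : ℕ} (hb : 1 ≤ b) :
    #{B ∈ powersetCard b univ | i ∈ B} = (Fintype.card α - 1).choose (b - 1) := by
  simpa using card_filter_powersetCard_subset {i} univ b (subset_univ _) (by simpa using hb)

lemma card_powersetCard_filter_mem_mem_mul {i j : α} (hij : i ≠ j) {b : ℕ} (hb : 1 ≤ b) :
    #{B ∈ powersetCard b univ | i ∈ B ∧ j ∈ B} * (Fintype.card α - 1) =
      (b - 1) * (Fintype.card α - 1).choose (b - 1) := by
  have hpair : ∀ B : Finset α, i ∈ B ∧ j ∈ B ↔ {i, j} ⊆ B := by simp [insert_subset_iff]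
  simp_rw [hpair]
  obtain ⟨m, hm⟩ : ∃ m, Fintype.card α = m + 2 :=
    ⟨Fintype.card α - 2, by have := Fintype.one_lt_card_iff.mpr ⟨i, j, hij⟩; omega⟩
  obtain rfl | ⟨k, rfl⟩ : b = 1 ∨ ∃ k, b = k + 2 := by
    rcases hb.eq_or_lt with h | h
    · exact .inl h.symm
    · exact .inr ⟨b - 2, by omega⟩
  · rw [card_eq_zero.mpr, zero_mul, Nat.sub_self, zero_mul]
    refine filter_eq_empty_iff.mpr fun B hB hijB => ?_
    have := card_le_card hijB
    rw [card_pair hij, (mem_powersetCard.mp hB).2] at this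
    omega
  · rw [card_filter_powersetCard_subset _ _ _ (subset_univ _) (by rw [card_pair hij]; omega),
      card_pair hij, card_univ, hm]
    simpa [mul_comm] using Nat.add_one_mul_choose_eq m k

lemma sum_powersetCard_filter_mem_sum (f : α → ℝ) (i : α) (hα : 2 ≤ Fintype.card α) {b : ℕ}
    (hb : 1 ≤ b) :
    ∑ B ∈ powersetCard b univ with i ∈ B, ∑ j ∈ B, f j =
      (Fintype.card α - 1).choose (b - 1) * ((b - 1) / (Fintype.card α - 1) * ∑ j, f j +
        (Fintype.card α - b) / (Fintype.card α - 1) * f i) := by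
  set n := Fintype.card α
  have hn : (n : ℝ) - 1 ≠ 0 := by
    have : (2 : ℝ) ≤ n := mod_cast hα
    linarith
  have hpair : ∀ j ∈ univ.erase i,
      (#{B ∈ powersetCard b univ | i ∈ B ∧ j ∈ B} : ℝ) =
        (b - 1) / (n - 1) * (n - 1).choose (b - 1) := by
    intro j hj
    have h := card_powersetCard_filter_mem_mem_mul (ne_of_mem_erase hj).symm hb
    rw [div_mul_eq_mul_div, eq_div_iff hn, ← Nat.cast_one, ← Nat.cast_sub hb,
      ← Nat.cast_sub (by omega : 1 ≤ n)]
    exact_mod_cast h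
  rw [sum_sum_eq_sum_card_filter_mem_smul, ← add_sum_erase _ _ (mem_univ i)]
  simp only [filter_filter, and_self, nsmul_eq_mul]
  rw [card_powersetCard_filter_mem i hb, sum_congr rfl fun j hj => by rw [hpair j hj],
    ← mul_sum, sum_erase_eq_sub (mem_univ i)]
  field_simp
  ring

end Counting

/-- **Simple bound**: `𝓛(b) ≤ (n/b)·((b−1)/(n−1))·L̄ + (1/b)·((n−b)/(n−1))·L_max`. -/
theorem simple_bound {n d : ℕ} (hn : 2 ≤ n) (a : Fin n → Fin d → ℝ)
    (U : ℝ) (hU : 0 < U) (b : ℕ) (hb : 1 ≤ b) (hbn : b ≤ n) :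
    expSmooth (by omega) U a b ≤
      ((n : ℝ) / b) * (((b : ℝ) - 1) / ((n : ℝ) - 1)) *
          ((1 / (n : ℝ)) * ∑ i, Lind U a i) +
        (1 / (b : ℝ)) * (((n : ℝ) - (b : ℝ)) / ((n : ℝ) - 1)) *
          (Finset.univ.sup' (Finset.univ_nonempty_iff.mpr (Fin.pos_iff_nonempty.mp (by omega)))
            (fun i => Lind U a i)) := by
  have hC : (0 : ℝ) < (n - 1).choose (b - 1) := mod_cast Nat.choose_pos (by omega)
  have hn2 : (2 : ℝ) ≤ n := mod_cast hn
  have hbn' : (b : ℝ) ≤ n := mod_cast hbn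
  rw [expSmooth, one_div, inv_mul_le_iff₀ hC]
  refine sup'_le _ _ fun i _ => ?_
  calc ∑ B ∈ powersetCard b univ with i ∈ B, LB U a B
      ≤ ∑ B ∈ powersetCard b univ with i ∈ B, 1 / b * ∑ j ∈ B, Lind U a j :=
        sum_le_sum fun B hB =>
          (mem_powersetCard.mp (mem_filter.mp hB).1).2 ▸ LB_le_mean_Lind hU.le a B
    _ = (n - 1).choose (b - 1) * ((n / b) * ((b - 1) / (n - 1)) * ((1 / n) * ∑ j, Lind U a j) +
          1 / b * ((n - b) / (n - 1)) * Lind U a i) := by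
        rw [← mul_sum, sum_powersetCard_filter_mem_sum _ i (by simpa using hn) hb]
        simp only [Fintype.card_fin]
        field_simp
    _ ≤ _ := by
        gcongr
        · exact mul_nonneg (by positivity) (div_nonneg (by linarith) (by linarith))
        · exact le_sup' (fun j => Lind U a j) (mem_univ i)
end

section
/- (Optimal mini-batch size for the simple bound) Let n ≥ 2 be an integer and let μ, λ, L̄, L_max be real numbers with 0 < μ ≤ L̄ ≤ L_max ≤ n·L̄ and λ ≥ 0. Define, for real t, g(t) := (4(n·L̄ − L_max + (n−1)λ)/(μ(n−1)))·t + 4n(L_max − L̄)/(μ(n−1)) and h(t) := −(4(L_max+λ)/(μ(n−1)))·t + n·(1 + 4(L_max+λ)/((n−1)μ)). Then: (i) g(1) ≤ h(1); (ii) g(n) ≥ h(n); (iii) the point t* := 1 + μ(n−1)/(4(L̄+λ)) lies in [1, n], satisfies g(t*) = h(t*), and minimizes the function t ↦ max{g(t), h(t)} over the interval [1, n]. -/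
/-- **Optimal mini-batch size for the simple bound.** With
`g(t) = (4(n·L̄ − L_max + (n−1)λ)/(μ(n−1)))·t + 4n(L_max − L̄)/(μ(n−1))` and
`h(t) = −(4(L_max+λ)/(μ(n−1)))·t + n(1 + 4(L_max+λ)/((n−1)μ))`, one has
(i) `g(1) ≤ h(1)`, (ii) `g(n) ≥ h(n)`, and (iii) `t* = 1 + μ(n−1)/(4(L̄+λ))`
lies in `[1, n]`, satisfies `g(t*) = h(t*)`, and minimizes `t ↦ max{g(t), h(t)}`
over `[1, n]`. -/
theorem optimal_minibatch_simple
    (n : ℕ) (hn : 2 ≤ n) (μ lam Lbar Lmax : ℝ)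
    (hμ : 0 < μ) (hμL : μ ≤ Lbar) (hLL : Lbar ≤ Lmax) (hLn : Lmax ≤ (n : ℝ) * Lbar)
    (hlam : 0 ≤ lam)
    (g h : ℝ → ℝ)
    (hg : g = fun t =>
      (4 * ((n : ℝ) * Lbar - Lmax + ((n : ℝ) - 1) * lam) / (μ * ((n : ℝ) - 1))) * t +
        4 * (n : ℝ) * (Lmax - Lbar) / (μ * ((n : ℝ) - 1)))
    (hh : h = fun t =>
      -(4 * (Lmax + lam) / (μ * ((n : ℝ) - 1))) * t +
        (n : ℝ) * (1 + 4 * (Lmax + lam) / (((n : ℝ) - 1) * μ)))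
    (tstar : ℝ) (htstar : tstar = 1 + μ * ((n : ℝ) - 1) / (4 * (Lbar + lam))) :
    g 1 ≤ h 1 ∧
    h (n : ℝ) ≤ g (n : ℝ) ∧
    (tstar ∈ Set.Icc (1 : ℝ) (n : ℝ) ∧ g tstar = h tstar ∧
      ∀ t ∈ Set.Icc (1 : ℝ) (n : ℝ), max (g tstar) (h tstar) ≤ max (g t) (h t)) := by

  have hN : (2:ℝ) ≤ (n:ℝ) := by exact_mod_cast hn
  have hN1 : 0 < (n:ℝ) - 1 := by linarith
  have hD : 0 < μ * ((n:ℝ) - 1) := mul_pos hμ hN1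
  have hLp : 0 < Lbar + lam := by linarith
  have hgt : ∀ t, g t = (4*((n:ℝ)*Lbar - Lmax + ((n:ℝ)-1)*lam)*t + 4*(n:ℝ)*(Lmax-Lbar)) / (μ*((n:ℝ)-1)) := by
    intro t; rw [hg]; ring
  have hht : ∀ t, h t = (-(4*(Lmax+lam))*t + ((n:ℝ)*(μ*((n:ℝ)-1)) + 4*(n:ℝ)*(Lmax+lam))) / (μ*((n:ℝ)-1)) := by
    intro t; rw [hh]
    field_simp
  have hA : 0 ≤ 4*((n:ℝ)*Lbar - Lmax + ((n:ℝ)-1)*lam) := by nlinarith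
  have hmono_g : ∀ s t : ℝ, s ≤ t → g s ≤ g t := by
    intro s t hst
    rw [hgt, hgt, div_le_div_iff₀ hD hD]
    nlinarith [mul_nonneg hA (sub_nonneg.mpr hst), hD.le]
  have hmono_h : ∀ s t : ℝ, s ≤ t → h t ≤ h s := by
    intro s t hst
    rw [hht, hht, div_le_div_iff₀ hD hD]
    nlinarith [mul_nonneg (by nlinarith : (0:ℝ) ≤ 4*(Lmax+lam)) (sub_nonneg.mpr hst), hD.le]
  have heq : g tstar = h tstar := by
    rw [hgt, hht, htstar]
    have h4 : (4 * (Lbar + lam)) ≠ 0 := by positivity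
    congr 1
    field_simp
    ring
  have ht1 : (1:ℝ) ≤ tstar := by
    rw [htstar]
    have : 0 ≤ μ * ((n:ℝ)-1) / (4*(Lbar+lam)) := by positivity
    linarith
  have htn : tstar ≤ (n:ℝ) := by
    rw [htstar]
    have : μ * ((n:ℝ)-1) / (4*(Lbar+lam)) ≤ (n:ℝ) - 1 := by
      rw [div_le_iff₀ (by positivity)]
      nlinarith
    linarith
  refine ⟨?_, ?_, ⟨ht1, htn⟩, heq, ?_⟩
  · rw [hgt, hht, div_le_div_iff₀ hD hD]
    nlinarith [hD.le, mul_pos (mul_pos (by linarith : (0:ℝ) < (n:ℝ)) hμ) hN1]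
  · rw [hgt, hht, div_le_div_iff₀ hD hD]
    nlinarith [hD.le, mul_nonneg (mul_nonneg (by linarith : (0:ℝ) ≤ (n:ℝ)) hN1.le) (by linarith : (0:ℝ) ≤ 4*(Lbar+lam) - μ)]
  · intro t ht
    rcases le_total t tstar with hc | hc
    · calc max (g tstar) (h tstar) = h tstar := by rw [heq, max_self]
        _ ≤ h t := hmono_h t tstar hc
        _ ≤ max (g t) (h t) := le_max_right _ _
    · calc max (g tstar) (h tstar) = g tstar := by rw [heq, max_self]
        _ ≤ g t := hmono_g tstar t hc
        _ ≤ max (g t) (h t) := le_max_left _ _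
end

section
/- (Optimal mini-batch size for the Bernstein bound: crossing point) Let n ≥ 2 and d ≥ 1 be integers and let μ, λ, L, L_max be real numbers with μ > 0, λ ≥ 0, and 2L + λ > 0. Define, for real t, g_Bernstein(t) := (4/(μ(n−1)))·(2nL − L_max + (n−1)λ)·t + (4n/(μ(n−1)))·(L_max − 2L) + (16/(3μ))·L_max·log d, and h(t) := −(4(L_max+λ)/(μ(n−1)))·t + n·(1 + 4(L_max+λ)/((n−1)μ)). Then the equation g_Bernstein(t) = h(t) has the unique real solution t = 1 + μ(n−1)/(4(2L+λ)) − (4/3)·log d·((n−1)/n)·(L_max/(2L+λ)). -/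
/-- **Crossing point for the Bernstein bound.** With
`g_Bernstein(t) = (4/(μ(n−1)))·(2nL − L_max + (n−1)λ)·t + (4n/(μ(n−1)))·(L_max − 2L)
 + (16/(3μ))·L_max·log d` and
`h(t) = −(4(L_max+λ)/(μ(n−1)))·t + n(1 + 4(L_max+λ)/((n−1)μ))`, the equation
`g_Bernstein(t) = h(t)` has the unique real solution
`t = 1 + μ(n−1)/(4(2L+λ)) − (4/3)·log d·((n−1)/n)·(L_max/(2L+λ))`. -/
theorem optimal_minibatch_bernstein_crossing
    (n d : ℕ) (hn : 2 ≤ n) (hd : 1 ≤ d) (μ lam L Lmax : ℝ)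
    (hμ : 0 < μ) (hlam : 0 ≤ lam) (hL : 0 < 2 * L + lam)
    (gB h : ℝ → ℝ)
    (hgB : gB = fun t =>
      (4 / (μ * ((n : ℝ) - 1))) * (2 * (n : ℝ) * L - Lmax + ((n : ℝ) - 1) * lam) * t +
        (4 * (n : ℝ) / (μ * ((n : ℝ) - 1))) * (Lmax - 2 * L) +
        (16 / (3 * μ)) * Lmax * Real.log d)
    (hh : h = fun t =>
      -(4 * (Lmax + lam) / (μ * ((n : ℝ) - 1))) * t +
        (n : ℝ) * (1 + 4 * (Lmax + lam) / (((n : ℝ) - 1) * μ))) :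
    ∀ t : ℝ, gB t = h t ↔
      t = 1 + μ * ((n : ℝ) - 1) / (4 * (2 * L + lam)) -
        (4 / 3) * Real.log d * (((n : ℝ) - 1) / (n : ℝ)) * (Lmax / (2 * L + lam)) := by
  subst hgB hh
  intro t
  have hn1 : (0:ℝ) < (n : ℝ) - 1 := by
    have : (2:ℝ) ≤ (n:ℝ) := by exact_mod_cast hn
    linarith
  have hn0 : (0:ℝ) < (n : ℝ) := by linarith
  set t₀ : ℝ := 1 + μ * ((n : ℝ) - 1) / (4 * (2 * L + lam)) -
      (4 / 3) * Real.log d * (((n : ℝ) - 1) / (n : ℝ)) * (Lmax / (2 * L + lam)) with ht₀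
  set c : ℝ := 4 * (n : ℝ) * (2 * L + lam) / (μ * ((n : ℝ) - 1)) with hc
  have hcpos : 0 < c := by
    apply div_pos
    · positivity
    · positivity
  have key : ((4 / (μ * ((n : ℝ) - 1))) * (2 * (n : ℝ) * L - Lmax + ((n : ℝ) - 1) * lam) * t +
        (4 * (n : ℝ) / (μ * ((n : ℝ) - 1))) * (Lmax - 2 * L) +
        (16 / (3 * μ)) * Lmax * Real.log d) -
      (-(4 * (Lmax + lam) / (μ * ((n : ℝ) - 1))) * t +
        (n : ℝ) * (1 + 4 * (Lmax + lam) / (((n : ℝ) - 1) * μ))) = c * (t - t₀) := by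
    rw [hc, ht₀]
    field_simp
    ring
  constructor
  · intro H
    have : c * (t - t₀) = 0 := by rw [← key]; linarith
    have := mul_eq_zero.mp this
    rcases this with h1 | h2
    · exact absurd h1 (ne_of_gt hcpos)
    · linarith [sub_eq_zero.mp h2]
  · intro H
    have : t - t₀ = 0 := by rw [H, sub_self]
    have : c * (t - t₀) = 0 := by rw [this, mul_zero]
    rw [← key] at this
    linarith
end

section
/- Let n ≥ 2, let a_1, …, a_n ∈ ℝ^d, U > 0, let i ∈ {1,…,n} and b ∈ {1,…,n}, and let S^i be a uniformly random (b−1)-element subset of [n]∖{i} (expectations below are averages over all C(n−1,b−1) such subsets). Then U·E[λ_max((1/b)·Σ_{j∈S^i∪{i}} a_j a_jᵀ)] ≤ (1/(b(n−1)))·((n−b)·L_i + n(b−1)·L) + U·E[λ_max((1/b)·Σ_{j∈S^i} a_j a_jᵀ − (1/b)·((b−1)/(n−1))·Σ_{j∈[n]∖{i}} a_j a_jᵀ)], where L_i := U‖a_i‖₂² and L := (U/n)·λ_max(Σ_{j=1}^n a_j a_jᵀ). -/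
/-!
Split the sampled matrix `(1/b) ∑_{j ∈ {i} ∪ B} a_j a_jᵀ` as the centred matrix
`(1/b) ∑_{j ∈ B} a_j a_jᵀ - β ∑_{j ≠ i} a_j a_jᵀ` plus `α a_i a_iᵀ + β ∑_j a_j a_jᵀ`, where
`β = (b-1)/(b(n-1))` and `α = 1/b - β = (n-b)/(b(n-1))` are both nonnegative.
Since `λ_max` is subadditive and positively homogeneous and `λ_max(a_i a_iᵀ) ≤ ‖a_i‖²`, each
subset contributes at most `α ‖a_i‖² + β λ_max(∑_j a_j a_jᵀ)` beyond the centred term; averaging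
over the subsets and multiplying by `U` gives the bound.
-/

open Finset Matrix

section lamMax

variable {d : ℕ}

lemma bddAbove_rayleigh (A : Matrix (Fin d) (Fin d) ℝ) :
    BddAbove {r : ℝ | ∃ x : Fin d → ℝ, (∑ j, x j ^ 2) = 1 ∧ r = x ⬝ᵥ A *ᵥ x} := by
  have hsphere : IsCompact {x : Fin d → ℝ | ∑ j, x j ^ 2 = 1} := by
    refine (isCompact_closedBall (0 : Fin d → ℝ) 1).of_isClosed_subset
      (isClosed_eq (by fun_prop) continuous_const) fun x hx => ?_
    rw [mem_closedBall_zero_iff, pi_norm_le_iff_of_nonneg zero_le_one]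
    intro j
    rw [Real.norm_eq_abs, ← sq_le_one_iff_abs_le_one]
    exact hx ▸ single_le_sum (f := fun j => x j ^ 2) (fun _ _ => sq_nonneg _) (mem_univ j)
  obtain ⟨c, hc⟩ := (hsphere.image (f := fun x => x ⬝ᵥ A *ᵥ x) (by fun_prop)).bddAbove
  exact ⟨c, fun r ⟨x, hx, hr⟩ => hr ▸ hc ⟨x, hx, rfl⟩⟩

lemma rayleigh_le_lamMax (A : Matrix (Fin d) (Fin d) ℝ) {x : Fin d → ℝ}
    (hx : ∑ j, x j ^ 2 = 1) : x ⬝ᵥ A *ᵥ x ≤ lamMax A :=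
  le_csSup (bddAbove_rayleigh A) ⟨x, hx, rfl⟩

lemma lamMax_le_of_rayleigh_le (hd : 0 < d) {A : Matrix (Fin d) (Fin d) ℝ} {c : ℝ}
    (h : ∀ x : Fin d → ℝ, ∑ j, x j ^ 2 = 1 → x ⬝ᵥ A *ᵥ x ≤ c) : lamMax A ≤ c :=
  csSup_le ⟨_, Pi.single ⟨0, hd⟩ 1, by simp [Pi.single_apply], rfl⟩
    fun _ ⟨x, hx, hr⟩ => hr ▸ h x hx

lemma lamMax_of_fin_zero (A : Matrix (Fin 0) (Fin 0) ℝ) : lamMax A = 0 := by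
  simp [lamMax]

lemma lamMax_add_le (A B : Matrix (Fin d) (Fin d) ℝ) :
    lamMax (A + B) ≤ lamMax A + lamMax B := by
  rcases d.eq_zero_or_pos with rfl | hd
  · simp [lamMax_of_fin_zero]
  refine lamMax_le_of_rayleigh_le hd fun x hx => ?_
  rw [add_mulVec, dotProduct_add]
  exact add_le_add (rayleigh_le_lamMax A hx) (rayleigh_le_lamMax B hx)

lemma lamMax_smul_le {c : ℝ} (hc : 0 ≤ c) (A : Matrix (Fin d) (Fin d) ℝ) :
    lamMax (c • A) ≤ c * lamMax A := by
  rcases d.eq_zero_or_pos with rfl | hd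
  · simp [lamMax_of_fin_zero]
  refine lamMax_le_of_rayleigh_le hd fun x hx => ?_
  rw [smul_mulVec, dotProduct_smul, smul_eq_mul]
  exact mul_le_mul_of_nonneg_left (rayleigh_le_lamMax A hx) hc

lemma rayleigh_vecMulVec_self (v x : Fin d → ℝ) :
    x ⬝ᵥ vecMulVec v v *ᵥ x = (v ⬝ᵥ x) ^ 2 := by
  rw [vecMulVec_mulVec, op_smul_eq_smul, dotProduct_smul, smul_eq_mul, dotProduct_comm x v, sq]

lemma lamMax_vecMulVec_self_le (v : Fin d → ℝ) :
    lamMax (vecMulVec v v) ≤ ∑ k, v k ^ 2 :=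
  Real.sSup_le (fun _ ⟨x, hx, hr⟩ => by
      rw [hr, rayleigh_vecMulVec_self]
      simpa [dotProduct, hx] using sum_mul_sq_le_sq_mul_sq univ v x)
    (sum_nonneg fun _ _ => sq_nonneg _)

end lamMax

lemma lamMax_smul_sum_insert_le {ι : Type*} [Fintype ι] [DecidableEq ι] {d : ℕ}
    (a : ι → Fin d → ℝ) {i : ι} {B : Finset ι} (hiB : i ∉ B) {c β : ℝ}
    (hβ : 0 ≤ β) (hβc : β ≤ c) :
    lamMax (c • ∑ j ∈ insert i B, vecMulVec (a j) (a j)) ≤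
      ((c - β) * ∑ k, a i k ^ 2 + β * lamMax (∑ j, vecMulVec (a j) (a j))) +
        lamMax (c • ∑ j ∈ B, vecMulVec (a j) (a j) -
          β • ∑ j ∈ univ.erase i, vecMulVec (a j) (a j)) := by
  set N := c • ∑ j ∈ B, vecMulVec (a j) (a j) - β • ∑ j ∈ univ.erase i, vecMulVec (a j) (a j)
  have hsplit : c • ∑ j ∈ insert i B, vecMulVec (a j) (a j) =
      N + ((c - β) • vecMulVec (a i) (a i) + β • ∑ j, vecMulVec (a j) (a j)) := by
    rw [sum_insert hiB, ← add_sum_erase _ _ (mem_univ i)]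
    module
  calc _ ≤ lamMax N + (lamMax ((c - β) • vecMulVec (a i) (a i)) +
        lamMax (β • ∑ j, vecMulVec (a j) (a j))) :=
        hsplit ▸ (lamMax_add_le _ _).trans (add_le_add le_rfl (lamMax_add_le _ _))
    _ ≤ _ := by
      rw [add_comm _ (lamMax N)]
      gcongr
      · exact (lamMax_smul_le (sub_nonneg.2 hβc) _).trans
          (mul_le_mul_of_nonneg_left (lamMax_vecMulVec_self_le _) (sub_nonneg.2 hβc))
      · exact lamMax_smul_le hβ _

lemma average_le_add_average {α : Type*} {s : Finset α} (hs : s.Nonempty) {f g : α → ℝ}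
    {K : ℝ} (h : ∀ x ∈ s, f x ≤ K + g x) :
    1 / (#s : ℝ) * ∑ x ∈ s, f x ≤ K + 1 / (#s : ℝ) * ∑ x ∈ s, g x := by
  have hcard : (0 : ℝ) < #s := by exact_mod_cast hs.card_pos
  calc _ ≤ 1 / (#s : ℝ) * ∑ x ∈ s, (K + g x) := by gcongr with x hx; exact h x hx
    _ = _ := by
      rw [sum_add_distrib, sum_const, nsmul_eq_mul]
      field_simp

/-- **Lemma bounding the expected subsample smoothness.** Averaging over all `(b−1)`-element
subsets `S^i` of `[n] ∖ {i}`,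
`U·E[λ_max((1/b)∑_{j∈S^i∪{i}} a_j a_jᵀ)] ≤ (1/(b(n−1)))·((n−b)L_i + n(b−1)L)
  + U·E[λ_max((1/b)∑_{j∈S^i} a_j a_jᵀ − (1/b)((b−1)/(n−1))∑_{j≠i} a_j a_jᵀ)]`,
with `L_i = U‖a_i‖₂²` and `L = (U/n)·λ_max(∑_j a_j a_jᵀ)`. -/
theorem bound_expected_subsample_smoothness
    {n d : ℕ} (hn : 2 ≤ n) (a : Fin n → Fin d → ℝ) (U : ℝ) (hU : 0 < U)
    (i : Fin n) (b : ℕ) (hb : 1 ≤ b) (hbn : b ≤ n) :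
    U * ((1 / (((n - 1).choose (b - 1) : ℕ) : ℝ)) *
        ∑ B ∈ Finset.powersetCard (b - 1) (Finset.univ.erase i),
          lamMax ((1 / (b : ℝ)) • ∑ j ∈ insert i B, Matrix.vecMulVec (a j) (a j))) ≤
      (1 / ((b : ℝ) * ((n : ℝ) - 1))) *
          (((n : ℝ) - (b : ℝ)) * (U * ∑ j, a i j ^ 2) +
            (n : ℝ) * ((b : ℝ) - 1) *
              ((U / (n : ℝ)) * lamMax (∑ j, Matrix.vecMulVec (a j) (a j)))) +
        U * ((1 / (((n - 1).choose (b - 1) : ℕ) : ℝ)) *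
          ∑ B ∈ Finset.powersetCard (b - 1) (Finset.univ.erase i),
            lamMax ((1 / (b : ℝ)) • ∑ j ∈ B, Matrix.vecMulVec (a j) (a j) -
              ((1 / (b : ℝ)) * (((b : ℝ) - 1) / ((n : ℝ) - 1))) •
                ∑ j ∈ Finset.univ.erase i, Matrix.vecMulVec (a j) (a j))) := by
  have hn1 : (1 : ℝ) ≤ n - 1 := by
    have : (2 : ℝ) ≤ n := by exact_mod_cast hn
    linarith
  have hb1 : (1 : ℝ) ≤ b := by exact_mod_cast hb
  have hbn' : (b : ℝ) ≤ n := by exact_mod_cast hbn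
  have hcard : #(powersetCard (b - 1) (univ.erase i)) = (n - 1).choose (b - 1) := by
    simp
  have hne : (powersetCard (b - 1) (univ.erase i)).Nonempty :=
    card_pos.1 (hcard ▸ Nat.choose_pos (by omega))
  have hβ : 0 ≤ 1 / (b : ℝ) * ((b - 1) / (n - 1)) := by positivity
  have hβc : 1 / (b : ℝ) * ((b - 1) / (n - 1)) ≤ 1 / b :=
    mul_le_of_le_one_right (by positivity) ((div_le_one (by linarith)).2 (by linarith))
  have hsubset := average_le_add_average hne fun B hB =>
    lamMax_smul_sum_insert_le a
      (fun hi => notMem_erase i univ ((mem_powersetCard.1 hB).1 hi)) hβ hβc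
  rw [hcard] at hsubset
  calc _ ≤ U * (_ + _) := mul_le_mul_of_nonneg_left hsubset hU.le
    _ = _ := by
      rw [mul_add]
      congr 1
      field_simp
      ring
end

section
/- (Variance bound) Let n ≥ 2 and let a_1, …, a_n ∈ ℝ^d, and fix i ∈ {1,…,n}. Then λ_max( (1/(n−1))·Σ_{j∈[n]∖{i}} (a_j a_jᵀ)² − (1/(n−1)²)·(Σ_{j∈[n]∖{i}} a_j a_jᵀ)² ) ≤ (max_{j∈[n]∖{i}} ‖a_j‖₂²)·λ_max( (1/(n−1))·Σ_{j∈[n]∖{i}} a_j a_jᵀ ). -/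
open Finset Matrix

lemma dot_vMV {d : ℕ} (b x : Fin d → ℝ) : x ⬝ᵥ (vecMulVec b b).mulVec x = (b ⬝ᵥ x)^2 := by
  simp only [dotProduct, mulVec, vecMulVec_apply, pow_two, Finset.sum_mul, Finset.mul_sum]
  rw [Finset.sum_comm]
  refine Finset.sum_congr rfl fun j _ => Finset.sum_congr rfl fun k _ => by ring

lemma vMV_sq {d : ℕ} (b : Fin d → ℝ) :
    vecMulVec b b * vecMulVec b b = (b ⬝ᵥ b) • vecMulVec b b := by
  ext j k
  simp [mul_apply, vecMulVec_apply, dotProduct, Finset.sum_mul, Finset.mul_sum]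
  refine Finset.sum_congr rfl fun l _ => by ring

lemma sum_mulVec' {d : ℕ} {ι : Type*} (s : Finset ι) (f : ι → Matrix (Fin d) (Fin d) ℝ)
    (x : Fin d → ℝ) : (∑ j ∈ s, f j).mulVec x = ∑ j ∈ s, (f j).mulVec x := by
  ext k
  simp only [mulVec, dotProduct, Matrix.sum_apply, Finset.sum_apply, Finset.sum_mul]
  rw [Finset.sum_comm]


lemma dotProduct_sum' {d : ℕ} {ι : Type*} (s : Finset ι) (x : Fin d → ℝ)
    (v : ι → Fin d → ℝ) : x ⬝ᵥ (∑ j ∈ s, v j) = ∑ j ∈ s, x ⬝ᵥ v j := by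
  simp only [dotProduct, Finset.sum_apply, Finset.mul_sum]
  rw [Finset.sum_comm]

/-- **Variance bound**:
`λ_max((1/(n−1))∑_{j≠i}(a_ja_jᵀ)² − (1/(n−1)²)(∑_{j≠i}a_ja_jᵀ)²)
  ≤ (max_{j≠i}‖a_j‖₂²)·λ_max((1/(n−1))∑_{j≠i}a_ja_jᵀ)`. -/
theorem variance_bound
    {n d : ℕ} (hn : 2 ≤ n) (a : Fin n → Fin d → ℝ) (i : Fin n) :
    lamMax ((1 / ((n : ℝ) - 1)) •
        ∑ j ∈ Finset.univ.erase i,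
          (Matrix.vecMulVec (a j) (a j) * Matrix.vecMulVec (a j) (a j)) -
      (1 / ((n : ℝ) - 1) ^ 2) •
        ((∑ j ∈ Finset.univ.erase i, Matrix.vecMulVec (a j) (a j)) *
          (∑ j ∈ Finset.univ.erase i, Matrix.vecMulVec (a j) (a j)))) ≤
    ((Finset.univ.erase i).sup'
        (by
          rw [← Finset.card_pos, Finset.card_erase_of_mem (Finset.mem_univ i),
            Finset.card_univ, Fintype.card_fin]
          omega)
        (fun j => ∑ k, a j k ^ 2)) *
      lamMax ((1 / ((n : ℝ) - 1)) •
        ∑ j ∈ Finset.univ.erase i, Matrix.vecMulVec (a j) (a j)) := by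
  have hs : (Finset.univ.erase i).Nonempty := by
    rw [← Finset.card_pos, Finset.card_erase_of_mem (Finset.mem_univ i),
      Finset.card_univ, Fintype.card_fin]
    omega
  set s : Finset (Fin n) := Finset.univ.erase i with hs_def
  set c : ℝ := s.sup' hs (fun j => ∑ k, a j k ^ 2) with hc_def
  have hn1 : (0:ℝ) < (n:ℝ) - 1 := by
    have : (2:ℝ) ≤ (n:ℝ) := by exact_mod_cast hn
    linarith
  set T : Matrix (Fin d) (Fin d) ℝ := ∑ j ∈ s, vecMulVec (a j) (a j) with hT_def
  set S : Matrix (Fin d) (Fin d) ℝ := (1 / ((n:ℝ) - 1)) • T with hS_def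
  set M : Matrix (Fin d) (Fin d) ℝ :=
    (1 / ((n:ℝ) - 1)) • ∑ j ∈ s, (vecMulVec (a j) (a j) * vecMulVec (a j) (a j)) -
      (1 / ((n:ℝ) - 1) ^ 2) • (T * T) with hM_def
  -- c is nonneg
  have hc : 0 ≤ c := by
    obtain ⟨j, hj⟩ := hs
    refine le_trans ?_ (Finset.le_sup' (fun j => ∑ k, a j k ^ 2) hj)
    exact Finset.sum_nonneg fun k _ => sq_nonneg _
  -- quadratic form of S
  have hQS : ∀ x : Fin d → ℝ,
      x ⬝ᵥ S.mulVec x = (1 / ((n:ℝ) - 1)) * ∑ j ∈ s, (a j ⬝ᵥ x)^2 := by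
    intro x
    rw [hS_def, smul_mulVec, dotProduct_smul, smul_eq_mul]
    congr 1
    rw [hT_def, sum_mulVec', dotProduct_sum']
    exact Finset.sum_congr rfl fun j _ => dot_vMV _ _
  -- T is symmetric
  have hTsym : Tᵀ = T := by
    rw [hT_def, Matrix.transpose_sum]
    exact Finset.sum_congr rfl fun j _ => by
      ext k l; simp [vecMulVec_apply, mul_comm]
  -- quadratic form of M bounded by c * (quadratic form of S)
  have hQM : ∀ x : Fin d → ℝ, x ⬝ᵥ M.mulVec x ≤ c * (x ⬝ᵥ S.mulVec x) := by
    intro x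
    have h2 : 0 ≤ x ⬝ᵥ (T * T).mulVec x := by
      rw [← Matrix.mulVec_mulVec, Matrix.dotProduct_mulVec]
      have hvm : x ᵥ* T = T.mulVec x := by
        conv_rhs => rw [← hTsym]
        rw [Matrix.mulVec_transpose]
      rw [hvm]
      exact Finset.sum_nonneg fun k _ => mul_self_nonneg _
    have h1 : x ⬝ᵥ ((1 / ((n:ℝ) - 1)) •
        ∑ j ∈ s, (vecMulVec (a j) (a j) * vecMulVec (a j) (a j))).mulVec x
        ≤ c * (x ⬝ᵥ S.mulVec x) := by
      rw [smul_mulVec, dotProduct_smul, smul_eq_mul, sum_mulVec',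
        dotProduct_sum', hQS, mul_left_comm]
      refine mul_le_mul_of_nonneg_left ?_ (le_of_lt (by positivity))
      rw [Finset.mul_sum]
      refine Finset.sum_le_sum fun j hj => ?_
      rw [vMV_sq, smul_mulVec, dotProduct_smul, smul_eq_mul, dot_vMV]
      refine mul_le_mul_of_nonneg_right ?_ (sq_nonneg _)
      calc a j ⬝ᵥ a j = ∑ k, a j k ^ 2 := by
            simp [dotProduct, pow_two]
        _ ≤ c := Finset.le_sup' (fun j => ∑ k, a j k ^ 2) hj
    have hsub : x ⬝ᵥ M.mulVec x =
        x ⬝ᵥ ((1 / ((n:ℝ) - 1)) •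
          ∑ j ∈ s, (vecMulVec (a j) (a j) * vecMulVec (a j) (a j))).mulVec x -
        (1 / ((n:ℝ) - 1) ^ 2) * (x ⬝ᵥ (T * T).mulVec x) := by
      show x ⬝ᵥ (((1 / ((n:ℝ) - 1)) •
          ∑ j ∈ s, (vecMulVec (a j) (a j) * vecMulVec (a j) (a j))) -
          (1 / ((n:ℝ) - 1) ^ 2) • (T * T)).mulVec x = _
      rw [Matrix.sub_mulVec, dotProduct_sub, smul_mulVec, dotProduct_smul,
        smul_eq_mul, smul_mulVec, dotProduct_smul, smul_eq_mul]
    rw [hsub]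
    have hpos : 0 ≤ (1 / ((n:ℝ) - 1) ^ 2) * (x ⬝ᵥ (T * T).mulVec x) := by
      exact mul_nonneg (by positivity) h2
    linarith
  -- the Rayleigh set of S is bounded above
  have hbdd : BddAbove {r : ℝ | ∃ x : Fin d → ℝ, (∑ j, x j ^ 2) = 1 ∧ r = x ⬝ᵥ S.mulVec x} := by
    refine ⟨(1 / ((n:ℝ) - 1)) * ∑ j ∈ s, ∑ k, a j k ^ 2, ?_⟩
    rintro r ⟨x, hx, rfl⟩
    rw [hQS]
    refine mul_le_mul_of_nonneg_left ?_ (le_of_lt (by positivity))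
    refine Finset.sum_le_sum fun j _ => ?_
    calc (a j ⬝ᵥ x)^2 ≤ (∑ k, a j k ^ 2) * ∑ k, x k ^ 2 :=
          Finset.sum_mul_sq_le_sq_mul_sq Finset.univ (a j) x
      _ = ∑ k, a j k ^ 2 := by rw [hx, mul_one]
  show lamMax M ≤ c * lamMax S
  unfold lamMax
  by_cases hex : ∃ x : Fin d → ℝ, (∑ j, x j ^ 2) = 1
  · obtain ⟨x0, hx0⟩ := hex
    refine csSup_le ⟨x0 ⬝ᵥ M.mulVec x0, x0, hx0, rfl⟩ ?_
    rintro r ⟨x, hx, rfl⟩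
    calc x ⬝ᵥ M.mulVec x ≤ c * (x ⬝ᵥ S.mulVec x) := hQM x
      _ ≤ c * sSup {r : ℝ | ∃ x : Fin d → ℝ, (∑ j, x j ^ 2) = 1 ∧ r = x ⬝ᵥ S.mulVec x} := by
          refine mul_le_mul_of_nonneg_left ?_ hc
          exact le_csSup hbdd ⟨x, hx, rfl⟩
  · have he1 : {r : ℝ | ∃ x : Fin d → ℝ, (∑ j, x j ^ 2) = 1 ∧ r = x ⬝ᵥ M.mulVec x} = ∅ := by
      ext r; simp only [Set.mem_setOf_eq, Set.mem_empty_iff_false, iff_false]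
      rintro ⟨x, hx, -⟩; exact hex ⟨x, hx⟩
    have he2 : {r : ℝ | ∃ x : Fin d → ℝ, (∑ j, x j ^ 2) = 1 ∧ r = x ⬝ᵥ S.mulVec x} = ∅ := by
      ext r; simp only [Set.mem_setOf_eq, Set.mem_empty_iff_false, iff_false]
      rintro ⟨x, hx, -⟩; exact hex ⟨x, hx⟩
    rw [he1, he2, Real.sSup_empty, mul_zero]
end

section
/- (Expectation bound on the maximum eigenvalue via the Laplace transform) Let X be a random real symmetric d×d matrix defined on a finite probability space. Then for every θ > 0, E[λ_max(X)] ≤ (1/θ)·log( E[ tr( exp(θ·X) ) ] ), and consequently E[λ_max(X)] ≤ inf_{θ>0} (1/θ)·log( E[ tr( exp(θ·X) ) ] ). -/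
open Finset Matrix

/-!
Diagonalising `X ω` gives `tr exp(θ X ω) = ∑ᵢ exp(θ λᵢ) ≥ exp(θ λ_max(X ω))`, i.e.
`θ λ_max(X ω) ≤ log tr exp(θ X ω)`. Averaging over `ω` and applying Jensen's inequality to the
concave logarithm gives `θ E[λ_max(X)] ≤ log E[tr exp(θX)]`; the infimum bound follows.
-/

namespace Matrix.IsHermitian

variable {n : Type*} [Fintype n] [DecidableEq n] {A : Matrix n n ℝ}

open scoped MatrixOrder in
theorem dotProduct_mulVec_le (hA : A.IsHermitian) {M : ℝ} (hM : ∀ i, hA.eigenvalues i ≤ M)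
    (x : n → ℝ) : x ⬝ᵥ A *ᵥ x ≤ M * (x ⬝ᵥ x) := by
  have hle : A ≤ algebraMap ℝ _ M := by
    refine le_algebraMap_of_spectrum_le (fun r hr => ?_) hA.isSelfAdjoint
    obtain ⟨i, rfl⟩ := hA.spectrum_real_eq_range_eigenvalues ▸ hr
    exact hM i
  simpa [Algebra.algebraMap_eq_smul_one, sub_mulVec, dotProduct_sub, smul_mulVec] using
    (Matrix.le_iff.mp hle).dotProduct_mulVec_nonneg x

theorem trace_exp_smul (hA : A.IsHermitian) (θ : ℝ) :
    trace (NormedSpace.exp (θ • A)) = ∑ i, Real.exp (θ * hA.eigenvalues i) := by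
  set U : Matrix n n ℝ := (hA.eigenvectorUnitary : Matrix n n ℝ)
  have hUU : star U * U = 1 := Unitary.star_mul_self_of_mem hA.eigenvectorUnitary.2
  have hUinv : U⁻¹ = star U := inv_eq_left_inv hUU
  have hconj : θ • A = U * diagonal (θ • hA.eigenvalues) * U⁻¹ := by
    conv_lhs => rw [hA.spectral_theorem]
    simp [hUinv, U]
  rw [hconj, exp_conj _ _ Unitary.isUnit_coe, trace_mul_cycle, hUinv, hUU, one_mul,
    exp_diagonal, trace_diagonal]
  simp [Real.exp_eq_exp_ℝ]

theorem trace_exp_smul_pos [Nonempty n] (hA : A.IsHermitian) (θ : ℝ) :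
    0 < trace (NormedSpace.exp (θ • A)) := by
  rw [hA.trace_exp_smul]
  exact sum_pos (fun i _ => Real.exp_pos _) univ_nonempty

end Matrix.IsHermitian

section lamMax

variable {d : ℕ} {A : Matrix (Fin d) (Fin d) ℝ}

theorem lamMax_le_of_eigenvalues_le (hd : 1 ≤ d) (hA : A.IsHermitian) {M : ℝ}
    (hM : ∀ i, hA.eigenvalues i ≤ M) : lamMax A ≤ M := by
  refine csSup_le ⟨_, Pi.single ⟨0, hd⟩ 1, by simp [Pi.single_apply, sq], rfl⟩ ?_
  rintro r ⟨x, hx, rfl⟩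
  have hx' : x ⬝ᵥ x = 1 := by simpa [dotProduct, sq] using hx
  simpa [hx'] using hA.dotProduct_mulVec_le hM x

theorem exp_mul_lamMax_le_trace_exp (hd : 1 ≤ d) (hA : A.IsHermitian) {θ : ℝ} (hθ : 0 ≤ θ) :
    Real.exp (θ * lamMax A) ≤ trace (NormedSpace.exp (θ • A)) := by
  have : Nonempty (Fin d) := ⟨⟨0, hd⟩⟩
  obtain ⟨i, hi⟩ := Finite.exists_max hA.eigenvalues
  rw [hA.trace_exp_smul]
  calc Real.exp (θ * lamMax A) ≤ Real.exp (θ * hA.eigenvalues i) := by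
        gcongr
        exact lamMax_le_of_eigenvalues_le hd hA hi
    _ ≤ ∑ j, Real.exp (θ * hA.eigenvalues j) :=
        single_le_sum (f := fun j => Real.exp (θ * hA.eigenvalues j))
          (fun j _ => (Real.exp_pos _).le) (mem_univ i)

theorem mul_lamMax_le_log_trace_exp (hd : 1 ≤ d) (hA : A.IsHermitian) {θ : ℝ} (hθ : 0 ≤ θ) :
    θ * lamMax A ≤ Real.log (trace (NormedSpace.exp (θ • A))) :=
  have : Nonempty (Fin d) := ⟨⟨0, hd⟩⟩
  (Real.le_log_iff_exp_le (hA.trace_exp_smul_pos θ)).2 (exp_mul_lamMax_le_trace_exp hd hA hθ)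

theorem mul_sum_lamMax_le_log_sum_trace_exp (hd : 1 ≤ d) {Ω : Type*} [Fintype Ω] {p : Ω → ℝ}
    (hp : ∀ ω, 0 ≤ p ω) (hp1 : ∑ ω, p ω = 1) {X : Ω → Matrix (Fin d) (Fin d) ℝ}
    (hX : ∀ ω, (X ω).IsHermitian) {θ : ℝ} (hθ : 0 ≤ θ) :
    θ * ∑ ω, p ω * lamMax (X ω) ≤
      Real.log (∑ ω, p ω * trace (NormedSpace.exp (θ • X ω))) := by
  have : Nonempty (Fin d) := ⟨⟨0, hd⟩⟩
  calc θ * ∑ ω, p ω * lamMax (X ω) = ∑ ω, p ω * (θ * lamMax (X ω)) := by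
        rw [mul_sum]
        exact sum_congr rfl fun ω _ => by ring
    _ ≤ ∑ ω, p ω * Real.log (trace (NormedSpace.exp (θ • X ω))) :=
        sum_le_sum fun ω _ =>
          mul_le_mul_of_nonneg_left (mul_lamMax_le_log_trace_exp hd (hX ω) hθ) (hp ω)
    _ ≤ Real.log (∑ ω, p ω * trace (NormedSpace.exp (θ • X ω))) :=
        strictConcaveOn_log_Ioi.concaveOn.le_map_sum (fun ω _ => hp ω) hp1
          (fun ω _ => (hX ω).trace_exp_smul_pos θ)

end lamMax

/-- **Expectation bound on the maximum eigenvalue via the Laplace transform.** For a random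
real symmetric `d×d` matrix `X` on a finite probability space, for every `θ > 0`,
`E[λ_max(X)] ≤ (1/θ)·log(E[tr(exp(θX))])`, and consequently
`E[λ_max(X)] ≤ inf_{θ>0} (1/θ)·log(E[tr(exp(θX))])`. -/
theorem expectation_bound_laplace_transform
    {d : ℕ} (hd : 1 ≤ d)
    (Ω : Type) [Fintype Ω] (p : Ω → ℝ)
    (hp : ∀ ω, 0 ≤ p ω) (hp1 : ∑ ω, p ω = 1)
    (X : Ω → Matrix (Fin d) (Fin d) ℝ)
    (hsymm : ∀ ω, (X ω).IsSymm) :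
    (∀ θ : ℝ, 0 < θ →
      ∑ ω, p ω * lamMax (X ω) ≤
        (1 / θ) * Real.log (∑ ω, p ω * Matrix.trace (NormedSpace.exp (θ • X ω)))) ∧
    ∑ ω, p ω * lamMax (X ω) ≤
      sInf {r : ℝ | ∃ θ : ℝ, 0 < θ ∧
        r = (1 / θ) * Real.log (∑ ω, p ω * Matrix.trace (NormedSpace.exp (θ • X ω)))} := by
  have hX : ∀ ω, (X ω).IsHermitian := fun ω => isHermitian_iff_isSymm.mpr (hsymm ω)
  have bound : ∀ θ : ℝ, 0 < θ → ∑ ω, p ω * lamMax (X ω) ≤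
      (1 / θ) * Real.log (∑ ω, p ω * Matrix.trace (NormedSpace.exp (θ • X ω))) := by
    intro θ hθ
    rw [one_div_mul_eq_div, le_div_iff₀' hθ]
    exact mul_sum_lamMax_le_log_sum_trace_exp hd hp hp1 hX hθ.le
  refine ⟨bound, le_csInf ⟨_, 1, one_pos, rfl⟩ ?_⟩
  rintro r ⟨θ, hθ, rfl⟩
  exact bound θ hθ
end

section
/- (Domination of the trace mgf: without replacement versus with replacement) Let d ≥ 1 and N ≥ 1 be integers, let A_1, …, A_N be real symmetric d×d matrices, let n ∈ {1,…,N}, and let θ ∈ ℝ. Then (1/C(N,n))·Σ_{S⊆[N], |S|=n} tr( exp( θ·Σ_{j∈S} A_j ) ) ≤ (1/N^n)·Σ_{f : [n]→[N]} tr( exp( θ·Σ_{k=1}^n A_{f(k)} ) ), where the right-hand sum runs over all (not necessarily injective) functions f from {1,…,n} to {1,…,N}. That is, the expected trace of the matrix exponential of a sum of n matrices sampled uniformly without replacement from {A_1,…,A_N} is at most that of a sum of n i.i.d. uniform (with replacement) samples. -/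
/-!
The inequality holds for every convex `F` on a real vector space (Hoeffding). Average both sides
over all relabellings `σ` of the population. For a sampling function `f : Fin n → α` and an
`n`-set `S` containing its values, the points `∑ k, x (σ (π (f k)))`, with `π` ranging over the
permutations of `S`, have barycentre `∑ a ∈ S, x (σ a)` because every element of `S` is hit
equally often; so Jensen's inequality bounds the relabelled without-replacement term of any
`n`-set by the relabelled with-replacement term of any `f`.

The matrix statement follows because `A ↦ tr exp A` is convex on symmetric matrices. In an
eigenbasis of `a • A + b • B` its eigenvalues are the corresponding convex combinations of the
diagonal entries of `A` and `B`, and `∑ exp` of the diagonal of a symmetric matrix in any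
orthonormal basis is at most its `tr exp` (Peierls), since the squared entries of an orthogonal
matrix form a doubly stochastic matrix.
-/

open Finset Matrix Equiv
open scoped Nat

section TraceExp

variable {m : Type*} [Fintype m] [DecidableEq m]

theorem ConvexOn.sum_map_mulVec_le {g : ℝ → ℝ} (hg : ConvexOn ℝ Set.univ g)
    {P : Matrix m m ℝ} (hP : P ∈ doublyStochastic ℝ m) (v : m → ℝ) :
    ∑ i, g ((P *ᵥ v) i) ≤ ∑ j, g (v j) :=
  calc ∑ i, g ((P *ᵥ v) i) ≤ ∑ i, ∑ j, P i j * g (v j) := by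
        gcongr with i
        simpa [mulVec, dotProduct] using hg.map_sum_le
          (fun j _ => nonneg_of_mem_doublyStochastic hP) (sum_row_of_mem_doublyStochastic hP i)
          (fun j _ => Set.mem_univ (v j))
    _ = ∑ j, g (v j) := by
        rw [sum_comm]
        simp [← sum_mul, sum_col_of_mem_doublyStochastic hP]

theorem Matrix.of_sq_mem_doublyStochastic {W : Matrix m m ℝ} (hW : W ∈ unitaryGroup m ℝ) :
    of (fun i j => W i j ^ 2) ∈ doublyStochastic ℝ m := by
  refine mem_doublyStochastic_iff_sum.2 ⟨fun i j => sq_nonneg _, fun i => ?_, fun j => ?_⟩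
  · simpa [mul_apply, sq] using congrFun (congrFun (mem_unitaryGroup_iff.1 hW) i) i
  · simpa [mul_apply, sq] using congrFun (congrFun (mem_unitaryGroup_iff'.1 hW) j) j

theorem Matrix.IsHermitian.trace_exp {A : Matrix m m ℝ} (hA : A.IsHermitian) :
    (NormedSpace.exp A).trace = ∑ i, Real.exp (hA.eigenvalues i) := by
  set U : Matrix m m ℝ := (hA.eigenvectorUnitary : Matrix m m ℝ)
  have hU : star U * U = 1 := Unitary.coe_star_mul_self _
  have hUinv : U⁻¹ = star U := inv_eq_left_inv hU
  have hexp : NormedSpace.exp A = U * NormedSpace.exp (diagonal hA.eigenvalues) * U⁻¹ := by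
    conv_lhs => rw [hA.spectral_theorem]
    simpa [hUinv] using exp_conj U (diagonal hA.eigenvalues) Unitary.isUnit_coe
  rw [hexp, hUinv, trace_mul_cycle, hU, one_mul, exp_diagonal, trace_diagonal]
  simp [Real.exp_eq_exp_ℝ]

theorem Matrix.IsHermitian.sum_map_diag_conj_le {g : ℝ → ℝ} (hg : ConvexOn ℝ Set.univ g)
    {A : Matrix m m ℝ} (hA : A.IsHermitian) {V : Matrix m m ℝ} (hV : V ∈ unitaryGroup m ℝ) :
    ∑ i, g ((star V * A * V) i i) ≤ ∑ i, g (hA.eigenvalues i) := by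
  set U : Matrix m m ℝ := (hA.eigenvectorUnitary : Matrix m m ℝ)
  set W := star V * U
  have hW : W ∈ unitaryGroup m ℝ := mul_mem (Unitary.star_mem hV) hA.eigenvectorUnitary.2
  have hconj : star V * A * V = W * diagonal hA.eigenvalues * star W := by
    conv_lhs => rw [hA.spectral_theorem]
    simp [W, U, mul_assoc]
  have hdiag : ∀ i, (star V * A * V) i i = (of (fun i j => W i j ^ 2) *ᵥ hA.eigenvalues) i := by
    intro i
    rw [hconj]
    simp [mul_apply, mulVec, dotProduct, diagonal_apply, sq, mul_comm, mul_left_comm]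
  simpa only [hdiag] using hg.sum_map_mulVec_le (of_sq_mem_doublyStochastic hW) hA.eigenvalues

theorem convexOn_trace_exp :
    ConvexOn ℝ {A : Matrix m m ℝ | A.IsHermitian} (fun A => (NormedSpace.exp A).trace) := by
  refine ⟨fun A hA B hB a b _ _ _ => (hA.smul (.all a)).add (hB.smul (.all b)),
    fun A hA B hB a b ha hb hab => ?_⟩
  have hC : (a • A + b • B).IsHermitian := (hA.smul (.all a)).add (hB.smul (.all b))
  set V : Matrix m m ℝ := (hC.eigenvectorUnitary : Matrix m m ℝ)
  have hV : V ∈ unitaryGroup m ℝ := hC.eigenvectorUnitary.2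
  have heig : ∀ i, hC.eigenvalues i = a * (star V * A * V) i i + b * (star V * B * V) i i := by
    intro i
    have := congrFun (congrFun hC.conjStarAlgAut_star_eigenvectorUnitary i) i
    simpa [mul_add, add_mul] using this.symm
  calc (NormedSpace.exp (a • A + b • B)).trace
      = ∑ i, Real.exp (a * (star V * A * V) i i + b * (star V * B * V) i i) := by
        simp only [hC.trace_exp, heig]
    _ ≤ ∑ i, (a * Real.exp ((star V * A * V) i i) + b * Real.exp ((star V * B * V) i i)) := by
        gcongr with i
        simpa using convexOn_exp.2 (Set.mem_univ _) (Set.mem_univ _) ha hb hab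
    _ = a * ∑ i, Real.exp ((star V * A * V) i i) + b * ∑ i, Real.exp ((star V * B * V) i i) := by
        rw [sum_add_distrib, mul_sum, mul_sum]
    _ ≤ a * (NormedSpace.exp A).trace + b * (NormedSpace.exp B).trace := by
        rw [hA.trace_exp, hB.trace_exp]
        exact add_le_add (mul_le_mul_of_nonneg_left (hA.sum_map_diag_conj_le convexOn_exp hV) ha)
          (mul_le_mul_of_nonneg_left (hB.sum_map_diag_conj_le convexOn_exp hV) hb)

end TraceExp

section Sampling

theorem Finset.exists_perm_map_eq {α : Type*} [DecidableEq α] {s t : Finset α} (h : #s = #t) :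
    ∃ τ : Perm α, s.map τ.toEmbedding = t := by
  obtain ⟨τ, hτ⟩ := (Set.powersetCard.isPretransitive (α := α) (n := #t)).exists_smul_eq
    ⟨s, h⟩ ⟨t, rfl⟩
  refine ⟨τ, ?_⟩
  simpa [Set.powersetCard.coe_smul, Finset.smul_finset_def, Finset.map_eq_image] using
    congrArg Subtype.val hτ

theorem Finset.sum_powersetCard_sum_perm_map {α M : Type*} [Fintype α] [DecidableEq α]
    [AddCommMonoid M] (n : ℕ) (g : Finset α → M) :
    ∑ S ∈ powersetCard n univ, ∑ σ : Perm α, g (S.map σ.toEmbedding) =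
      (Fintype.card α)! • ∑ S ∈ powersetCard n univ, g S := by
  have hmap : ∀ σ : Perm α,
      ∑ S ∈ powersetCard n univ, g (S.map σ.toEmbedding) = ∑ S ∈ powersetCard n univ, g S := by
    intro σ
    conv_rhs => rw [← map_univ_equiv σ, powersetCard_map, sum_map]
    rfl
  rw [sum_comm, sum_congr rfl fun σ _ => hmap σ]
  simp [Fintype.card_perm]

theorem Fintype.sum_fun_sum_perm_comp {α ι M : Type*} [Fintype α] [DecidableEq α] [Fintype ι]
    [DecidableEq ι] [AddCommMonoid M] (h : (ι → α) → M) :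
    ∑ f : ι → α, ∑ σ : Perm α, h (σ ∘ f) = (Fintype.card α)! • ∑ f : ι → α, h f := by
  rw [sum_comm]
  calc ∑ σ : Perm α, ∑ f : ι → α, h (σ ∘ f) = ∑ σ : Perm α, ∑ f : ι → α, h f :=
        Finset.sum_congr rfl fun σ _ => Equiv.sum_comp ((Equiv.refl ι).arrowCongr σ) h
    _ = (Fintype.card α)! • ∑ f : ι → α, h f := by simp [Fintype.card_perm]

theorem Equiv.Perm.sum_sum_perm_apply {α M ι : Type*} [Fintype α] [DecidableEq α]
    [AddCommMonoid M] [Fintype ι] (g : α → M) (b : ι → α)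
    (hb : Fintype.card ι = Fintype.card α) :
    ∑ i, ∑ π : Perm α, g (π (b i)) = (Fintype.card α)! • ∑ a, g a := by
  have hconst : ∀ a a', ∑ π : Perm α, g (π a) = ∑ π : Perm α, g (π a') := fun a a' =>
    Fintype.sum_equiv (Equiv.mulRight (swap a' a)) _ _ fun π => by simp
  obtain ⟨e⟩ := Fintype.card_eq.1 hb
  calc ∑ i, ∑ π : Perm α, g (π (b i)) = ∑ i, ∑ π : Perm α, g (π (e i)) :=
        sum_congr rfl fun i _ => hconst _ _
    _ = ∑ π : Perm α, ∑ a, g (π a) := by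
        rw [Fintype.sum_equiv e _ (fun a => ∑ π : Perm α, g (π a)) fun _ => rfl, sum_comm]
    _ = (Fintype.card α)! • ∑ a, g a := by simp [Equiv.sum_comp, Fintype.card_perm]

variable {α E : Type*} [DecidableEq α] [AddCommGroup E] [Module ℝ E] {K : Submodule ℝ E}
  {F : E → ℝ}

theorem ConvexOn.factorial_mul_map_sum_le (hF : ConvexOn ℝ K F) {y : α → E} (hy : ∀ a, y a ∈ K)
    {ι : Type*} [Fintype ι] {S : Finset α} (hS : #S = Fintype.card ι) {f : ι → α}
    (hf : ∀ i, f i ∈ S) :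
    (#S)! * F (∑ a ∈ S, y a) ≤ ∑ π : Perm S, F (∑ i, y (Perm.ofSubtype π (f i))) := by
  have hfact : ((#S)! : ℝ) ≠ 0 := by positivity
  have hsum : ∑ π : Perm S, ∑ i, y (Perm.ofSubtype π (f i)) = (#S)! • ∑ a ∈ S, y a := by
    simp_rw [Perm.ofSubtype_apply_of_mem _ (hf _)]
    rw [sum_comm, Perm.sum_sum_perm_apply (fun a : S => y a) (fun i => ⟨f i, hf i⟩) (by simp [hS]),
      Fintype.card_coe, sum_coe_sort S y]
  have hjensen := hF.map_sum_le (t := univ) (w := fun _ => ((#S)! : ℝ)⁻¹)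
    (p := fun π : Perm S => ∑ i, y (Perm.ofSubtype π (f i))) (fun _ _ => by positivity)
    (by simp [Fintype.card_perm, hfact]) (fun π _ => sum_mem fun i _ => hy _)
  rw [← smul_sum, hsum, ← Nat.cast_smul_eq_nsmul ℝ, smul_smul, inv_mul_cancel₀ hfact, one_smul,
    ← smul_sum, smul_eq_mul, le_inv_mul_iff₀ (by positivity)] at hjensen
  exact hjensen

variable [Fintype α]

theorem ConvexOn.sum_perm_map_sum_finset_le_of_mem (hF : ConvexOn ℝ K F) {x : α → E}
    (hx : ∀ a, x a ∈ K) {ι : Type*} [Fintype ι] {S : Finset α} (hS : #S = Fintype.card ι)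
    {f : ι → α} (hf : ∀ i, f i ∈ S) :
    ∑ σ : Perm α, F (∑ a ∈ S, x (σ a)) ≤ ∑ σ : Perm α, F (∑ i, x (σ (f i))) := by
  refine le_of_mul_le_mul_left ?_ (by positivity : (0 : ℝ) < (#S)!)
  calc (#S)! * ∑ σ : Perm α, F (∑ a ∈ S, x (σ a))
      ≤ ∑ σ : Perm α, ∑ π : Perm S, F (∑ i, x (σ (Perm.ofSubtype π (f i)))) := by
        rw [mul_sum]
        exact sum_le_sum fun σ _ => hF.factorial_mul_map_sum_le (fun a => hx (σ a)) hS hf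
    _ = ∑ π : Perm S, ∑ σ : Perm α, F (∑ i, x ((σ * Perm.ofSubtype π) (f i))) := sum_comm
    _ = ∑ π : Perm S, ∑ σ : Perm α, F (∑ i, x (σ (f i))) :=
        sum_congr rfl fun π _ =>
          Equiv.sum_comp (Equiv.mulRight (Perm.ofSubtype π)) fun σ => F (∑ i, x (σ (f i)))
    _ = (#S)! * ∑ σ : Perm α, F (∑ i, x (σ (f i))) := by
        simp [Fintype.card_perm]

theorem ConvexOn.sum_perm_map_sum_finset_le (hF : ConvexOn ℝ K F) {x : α → E}
    (hx : ∀ a, x a ∈ K) {ι : Type*} [Fintype ι] {S : Finset α} (hS : #S = Fintype.card ι)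
    (f : ι → α) :
    ∑ σ : Perm α, F (∑ a ∈ S, x (σ a)) ≤ ∑ σ : Perm α, F (∑ i, x (σ (f i))) := by
  obtain ⟨T, hfT, hT⟩ := exists_superset_card_eq (s := univ.image f) (n := #S)
    (card_image_le.trans (by rw [card_univ, hS])) (card_le_univ S)
  obtain ⟨τ, hτ⟩ := exists_perm_map_eq hT
  have hτf : ∀ i, τ (f i) ∈ S := fun i =>
    hτ ▸ mem_map_of_mem _ (hfT (mem_image_of_mem f (mem_univ i)))
  calc ∑ σ : Perm α, F (∑ a ∈ S, x (σ a))
      ≤ ∑ σ : Perm α, F (∑ i, x ((σ * τ) (f i))) := hF.sum_perm_map_sum_finset_le_of_mem hx hS hτf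
    _ = ∑ σ : Perm α, F (∑ i, x (σ (f i))) :=
        Equiv.sum_comp (Equiv.mulRight τ) (fun σ => F (∑ i, x (σ (f i))))

theorem ConvexOn.sampling_without_replacement_le_with_replacement (hF : ConvexOn ℝ K F)
    {x : α → E} (hx : ∀ a, x a ∈ K) {n : ℕ} (hn : n ≤ Fintype.card α) :
    (1 / ((Fintype.card α).choose n : ℝ)) * ∑ S ∈ powersetCard n univ, F (∑ a ∈ S, x a) ≤
      (1 / ((Fintype.card α : ℝ) ^ n)) * ∑ f : Fin n → α, F (∑ k, x (f k)) := by
  set N := Fintype.card α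
  have hsets : ∑ S ∈ powersetCard n univ, ∑ σ : Perm α, F (∑ a ∈ S, x (σ a)) =
      N ! * ∑ S ∈ powersetCard n univ, F (∑ a ∈ S, x a) := by
    simpa [sum_map] using sum_powersetCard_sum_perm_map n fun S => F (∑ a ∈ S, x a)
  have hfuns : ∑ f : Fin n → α, ∑ σ : Perm α, F (∑ k, x (σ (f k))) =
      N ! * ∑ f : Fin n → α, F (∑ k, x (f k)) := by
    simpa using Fintype.sum_fun_sum_perm_comp fun f : Fin n → α => F (∑ k, x (f k))
  have hcross : (N : ℝ) ^ n * ∑ S ∈ powersetCard n univ, ∑ σ : Perm α, F (∑ a ∈ S, x (σ a)) ≤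
      (N.choose n : ℝ) * ∑ f : Fin n → α, ∑ σ : Perm α, F (∑ k, x (σ (f k))) :=
    calc (N : ℝ) ^ n * ∑ S ∈ powersetCard n univ, ∑ σ : Perm α, F (∑ a ∈ S, x (σ a))
        = ∑ f : Fin n → α, ∑ S ∈ powersetCard n univ, ∑ σ : Perm α, F (∑ a ∈ S, x (σ a)) := by
          simp [N]
      _ ≤ ∑ f : Fin n → α, ∑ S ∈ powersetCard n univ, ∑ σ : Perm α, F (∑ k, x (σ (f k))) :=
          sum_le_sum fun f _ => sum_le_sum fun S hS =>
            hF.sum_perm_map_sum_finset_le hx (by simpa using (mem_powersetCard.1 hS).2) f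
      _ = (N.choose n : ℝ) * ∑ f : Fin n → α, ∑ σ : Perm α, F (∑ k, x (σ (f k))) := by
          rw [sum_comm]
          simp [N]
  rw [hsets, hfuns, mul_left_comm, mul_left_comm (N.choose n : ℝ)] at hcross
  replace hcross := le_of_mul_le_mul_left hcross (by positivity)
  have hC : (0 : ℝ) < N.choose n := by exact_mod_cast Nat.choose_pos hn
  have hNn : (0 : ℝ) < (N : ℝ) ^ n := hC.trans_le (mod_cast Nat.choose_le_pow N n)
  rw [one_div_mul_eq_div, one_div_mul_eq_div, div_le_div_iff₀ hC hNn]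
  linarith

end Sampling

theorem trace_mgf_without_le_with_replacement_general
    {d N : ℕ}
    (A : Fin N → Matrix (Fin d) (Fin d) ℝ)
    (hsymm : ∀ j, (A j).IsSymm)
    (n : ℕ) (hnN : n ≤ N) (θ : ℝ) :
    (1 / (N.choose n : ℝ)) *
        ∑ S ∈ Finset.powersetCard n (Finset.univ : Finset (Fin N)),
          Matrix.trace (NormedSpace.exp (θ • ∑ j ∈ S, A j)) ≤
      (1 / ((N : ℝ) ^ n)) *
        ∑ f : Fin n → Fin N,
          Matrix.trace (NormedSpace.exp (θ • ∑ k, A (f k))) := by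
  have hF : ConvexOn ℝ (selfAdjoint.submodule ℝ (Matrix (Fin d) (Fin d) ℝ))
      (fun M : Matrix (Fin d) (Fin d) ℝ => (NormedSpace.exp M).trace) := convexOn_trace_exp
  have hx : ∀ j, θ • A j ∈ selfAdjoint.submodule ℝ (Matrix (Fin d) (Fin d) ℝ) := fun j =>
    Submodule.smul_mem _ θ (isHermitian_iff_isSymm.2 (hsymm j))
  simpa [smul_sum] using
    hF.sampling_without_replacement_le_with_replacement hx (n := n) (by simpa using hnN)

/-- **Domination of the trace mgf: sampling without replacement versus with replacement.**
For symmetric matrices `A_1, …, A_N`, `1 ≤ n ≤ N` and `θ ∈ ℝ`, the average over all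
`n`-element subsets `S ⊆ [N]` of `tr(exp(θ·∑_{j∈S} A_j))` is at most the average over all
functions `f : [n] → [N]` of `tr(exp(θ·∑_k A_{f(k)}))`. -/
theorem trace_mgf_without_le_with_replacement
    {d N : ℕ} (hd : 1 ≤ d) (hN : 1 ≤ N)
    (A : Fin N → Matrix (Fin d) (Fin d) ℝ)
    (hsymm : ∀ j, (A j).IsSymm)
    (n : ℕ) (hn : 1 ≤ n) (hnN : n ≤ N) (θ : ℝ) :
    (1 / (N.choose n : ℝ)) *
        ∑ S ∈ Finset.powersetCard n (Finset.univ : Finset (Fin N)),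
          Matrix.trace (NormedSpace.exp (θ • ∑ j ∈ S, A j)) ≤
      (1 / ((N : ℝ) ^ n)) *
        ∑ f : Fin n → Fin N,
          Matrix.trace (NormedSpace.exp (θ • ∑ k, A (f k))) :=
  trace_mgf_without_le_with_replacement_general A hsymm n hnN θ
end
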